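/- Let γ ∈ ℝ, T > 0, and let v₀, v₁, v₂, v₃ : [0,T] → ℂ be continuous (the boundary values u, uₓ, u_{xx}, u_{xxx} at x = 0). Define R(t,ζ) = [[R₁₁, R₁₂],[R₂₁, −R₁₁]] with R₁₁(t,ζ) = −4iγζ²|v₀|² − 2γζ(v₀·conj(v₁) − v₁·conj(v₀)) + iγ(3|v₀|⁴ − |v₁|² + conj(v₀)v₂ + v₀·conj(v₂)) + i|v₀|², R₁₂(t,ζ) = −8γζ³v₀ − 4iγζ²v₁ + 2γζv₂ + 2ζ(2γ|v₀|²+1)v₀ + iγv₃ + i(6γ|v₀|²+1)v₁, R₂₁(t,ζ) = −8γζ³·conj(v₀) − 4iγζ²·conj(v₁) + 2γζ·conj(v₂) + 2ζ(2γ|v₀|²+1)·conj(v₀) + iγ·conj(v₃) + i(6γ|v₀|²+1)·conj(v₁), where all vⱼ are evaluated at t. Set θ = 8γζ⁴ − 2ζ² and Λ = diag(1,−1). Then for every ζ ∈ ℂ the Volterra equation G(t) = I − ∫ₜ^T exp(iθ(t−τ)Λ)·R(τ,ζ)G(τ)·exp(−iθ(t−τ)Λ) dτ has a unique continuous solution G(·,ζ)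 : [0,T] → M₂(ℂ); det G(t,ζ) = 1 for all t ∈ [0,T]; and for each fixed t ∈ [0,T], every entry of G(t,ζ) is an entire function of ζ. In particular the spectral functions Y(ζ) = G₂₂(0,ζ) and Z(ζ) = G₁₂(0,ζ) are entire. -/

import Mathlib

open MeasureTheory Matrix intervalIntegral

/-- The matrix `R(t,ζ)` of the t-part of the FODNLS Lax pair at `x = 0`, built from the
boundary values `v₀ = u(0,·)`, `v₁ = uₓ(0,·)`, `v₂ = u_xx(0,·)`, `v₃ = u_xxx(0,·)`. -/
noncomputable def Rm (γ : ℝ) (v₀ v₁ v₂ v₃ : ℝ → ℂ) (t : ℝ) (ζ : ℂ) :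
    Matrix (Fin 2) (Fin 2) ℂ :=
  let g : ℂ := (γ : ℂ)
  let n0 : ℂ := (Complex.normSq (v₀ t) : ℂ)
  let R11 : ℂ :=
    -4 * Complex.I * g * ζ ^ 2 * n0 -
      2 * g * ζ * (v₀ t * (starRingEnd ℂ) (v₁ t) - v₁ t * (starRingEnd ℂ) (v₀ t)) +
      Complex.I * g * (3 * n0 ^ 2 - (Complex.normSq (v₁ t) : ℂ) +
        (starRingEnd ℂ) (v₀ t) * v₂ t + v₀ t * (starRingEnd ℂ) (v₂ t)) +
      Complex.I * n0
  let R12 : ℂ :=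
    -8 * g * ζ ^ 3 * v₀ t - 4 * Complex.I * g * ζ ^ 2 * v₁ t + 2 * g * ζ * v₂ t +
      2 * ζ * (2 * g * n0 + 1) * v₀ t + Complex.I * g * v₃ t +
      Complex.I * (6 * g * n0 + 1) * v₁ t
  let R21 : ℂ :=
    -8 * g * ζ ^ 3 * (starRingEnd ℂ) (v₀ t) -
      4 * Complex.I * g * ζ ^ 2 * (starRingEnd ℂ) (v₁ t) +
      2 * g * ζ * (starRingEnd ℂ) (v₂ t) + 2 * ζ * (2 * g * n0 + 1) * (starRingEnd ℂ) (v₀ t) +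
      Complex.I * g * (starRingEnd ℂ) (v₃ t) +
      Complex.I * (6 * g * n0 + 1) * (starRingEnd ℂ) (v₁ t)
  !![R11, R12; R21, -R11]

/-- The integrand `exp(iθ(t−τ)Λ) · R(τ,ζ)G(τ) · exp(−iθ(t−τ)Λ)` with `θ = 8γζ⁴ − 2ζ²`
and `Λ = diag(1,−1)`, so that `exp(cΛ) = diag(e^c, e^{−c})`. -/
noncomputable def Km (γ : ℝ) (v₀ v₁ v₂ v₃ : ℝ → ℂ) (ζ : ℂ)
    (G : ℝ → Matrix (Fin 2) (Fin 2) ℂ) (t τ : ℝ) : Matrix (Fin 2) (Fin 2) ℂ :=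
  let θ : ℂ := 8 * (γ : ℂ) * ζ ^ 4 - 2 * ζ ^ 2
  !![Complex.exp (Complex.I * θ * ((t - τ : ℝ) : ℂ)), 0;
     0, Complex.exp (-(Complex.I * θ * ((t - τ : ℝ) : ℂ)))] *
    (Rm γ v₀ v₁ v₂ v₃ τ ζ * G τ) *
    !![Complex.exp (-(Complex.I * θ * ((t - τ : ℝ) : ℂ))), 0;
       0, Complex.exp (Complex.I * θ * ((t - τ : ℝ) : ℂ))]

/-- `G` is a continuous solution on `[0,T]` of the Volterra equation
`G(t) = I − ∫ₜ^T exp(iθ(t−τ)Λ)·R(τ,ζ)G(τ)·exp(−iθ(t−τ)Λ) dτ` (entrywise). -/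
def IsVolterraSolT (γ : ℝ) (T : ℝ) (v₀ v₁ v₂ v₃ : ℝ → ℂ) (ζ : ℂ)
    (G : ℝ → Matrix (Fin 2) (Fin 2) ℂ) : Prop :=
  (∀ i j : Fin 2, ContinuousOn (fun t => G t i j) (Set.Icc 0 T)) ∧
  ∀ t ∈ Set.Icc (0 : ℝ) T, ∀ i j : Fin 2,
    IntervalIntegrable (fun τ => Km γ v₀ v₁ v₂ v₃ ζ G t τ i j) volume t T ∧
    G t i j = (1 : Matrix (Fin 2) (Fin 2) ℂ) i j - ∫ τ in t..T, Km γ v₀ v₁ v₂ v₃ ζ G t τ i j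

/-!
In the gauge `G(t) = e^{iθtΛ} Q(t) e^{-iθtΛ}` the equation becomes the linear Volterra equation
`Q(t) = I - ∫ₜ^T A(τ) Q(τ) dτ` with `A = e^{-iθτΛ} R e^{iθτΛ}`, which is jointly continuous in
`(ζ, τ)`, entire in `ζ` and trace-free. Its Dyson series is dominated by `Σ (M(T-t))ⁿ/n!`
locally uniformly in `ζ`, so it is a continuous solution, entire in `ζ` because every term is.
Uniqueness is uniqueness for the linear ODE `Q' = AQ`, `Q(T) = I`, and `det Q ≡ 1` because
`(det Q)' = tr A · det Q = 0`.
-/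

open Set Metric Filter Topology
open scoped Interval Nat

theorem ContinuousOn.exists_continuous_eqOn_Icc {β : Type*} [TopologicalSpace β] {f : ℝ → β}
    {a b : ℝ} (hab : a ≤ b) (hf : ContinuousOn f (Icc a b)) :
    ∃ g : ℝ → β, Continuous g ∧ EqOn f g (Icc a b) :=
  ⟨IccExtend hab ((Icc a b).domRestrict f), continuous_IccExtend_iff.2 hf.domRestrict,
    fun _ hx => (IccExtend_of_mem hab ((Icc a b).domRestrict f) hx).symm⟩

section ParametricIntegral

variable {E : Type*} [NormedAddCommGroup E] [NormedSpace ℂ E] [CompleteSpace E]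

/-- Cauchy's estimate bounds the `ζ`-derivative of `F` locally uniformly, so that dominated
differentiation under the integral sign applies. -/
theorem differentiable_intervalIntegral_of_continuous {F : ℂ → ℝ → E}
    (hF : Continuous F.uncurry) (hdF : ∀ τ, Differentiable ℂ (F · τ)) (a b : ℝ) :
    Differentiable ℂ fun ζ => ∫ τ in a..b, F ζ τ := by
  intro ζ₀
  obtain ⟨C, hC⟩ := ((isCompact_closedBall ζ₀ 2).prod (isCompact_uIcc (a := a) (b := b))
    ).exists_bound_of_continuousOn hF.continuousOn
  have hcont : ∀ ζ, Continuous (F ζ) := fun ζ => hF.comp (Continuous.prodMk_right ζ)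
  have hderiv_le : ∀ τ ∈ Ι a b, ∀ ζ ∈ ball ζ₀ 1, ‖deriv (F · τ) ζ‖ ≤ C := by
    intro τ hτ ζ hζ
    have hsphere : ∀ z ∈ sphere ζ 1, ‖F z τ‖ ≤ C := fun z hz =>
      hC (z, τ) ⟨mem_closedBall.2
        (by linarith [dist_triangle z ζ ζ₀, mem_sphere.1 hz, mem_ball.1 hζ]), uIoc_subset_uIcc hτ⟩
    simpa using Complex.norm_deriv_le_of_forall_mem_sphere_norm_le one_pos
      (hdF τ).diffContOnCl hsphere
  have hmeas : AEStronglyMeasurable (fun τ => deriv (F · τ) ζ₀) (volume.restrict (Ι a b)) :=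
    ((stronglyMeasurable_deriv_with_param (f := fun τ ζ => F ζ τ)
      (hF.comp continuous_swap)).comp_measurable
        (measurable_id.prodMk measurable_const)).aestronglyMeasurable
  exact (hasDerivAt_integral_of_dominated_loc_of_deriv_le (ball_mem_nhds ζ₀ one_pos)
    (Eventually.of_forall fun ζ => (hcont ζ).aestronglyMeasurable)
    ((hcont ζ₀).intervalIntegrable _ _) hmeas (ae_of_all _ hderiv_le)
    intervalIntegrable_const
    (ae_of_all _ fun τ _ ζ _ => (hdF τ ζ).hasDerivAt)).2.differentiableAt

end ParametricIntegral

section Volterra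

variable {E : Type*} [NormedAddCommGroup E] [NormedSpace ℝ E]

theorem norm_integral_le_mul_pow_div {f : ℝ → E} {t T K : ℝ} (htT : t ≤ T) (n : ℕ)
    (hf : ∀ τ ∈ Ioc t T, ‖f τ‖ ≤ K * (T - τ) ^ n) :
    ‖∫ τ in t..T, f τ‖ ≤ K * (T - t) ^ (n + 1) / (n + 1) := by
  calc ‖∫ τ in t..T, f τ‖ ≤ ∫ τ in t..T, K * (T - τ) ^ n :=
        norm_integral_le_of_norm_le htT (ae_of_all _ hf)
          ((by fun_prop : Continuous fun τ => K * (T - τ) ^ n).intervalIntegrable _ _)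
    _ = K * (T - t) ^ (n + 1) / (n + 1) := by
        rw [intervalIntegral.integral_const_mul, integral_comp_sub_left (· ^ n), integral_pow]
        simp [mul_div_assoc]

variable [CompleteSpace E]

theorem hasDerivWithinAt_of_eq_sub_integral {Q g : ℝ → E} {c : E} {t₀ T t : ℝ}
    (hg : ContinuousOn g (Icc t₀ T)) (hQ : ∀ s ∈ Icc t₀ T, Q s = c - ∫ τ in s..T, g τ)
    (ht : t ∈ Icc t₀ T) : HasDerivWithinAt Q (g t) (Icc t₀ T) t := by
  have : Fact (t ∈ Icc t₀ T) := ⟨ht⟩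
  have hint : IntervalIntegrable g volume t T :=
    (hg.mono (uIcc_subset_Icc ht (right_mem_Icc.2 (ht.1.trans ht.2)))).intervalIntegrable
  have := (integral_hasDerivWithinAt_left (s := Icc t₀ T) hint
    (hg.stronglyMeasurableAtFilter_nhdsWithin measurableSet_Icc t) (hg t ht)).const_sub c
  rw [neg_neg] at this
  exact this.congr hQ (hQ t ht)

end Volterra

section Dyson

variable {𝔸 : Type*} [NormedRing 𝔸] [NormedSpace ℝ 𝔸]

noncomputable def dysonTerm (a : ℝ → 𝔸) (T : ℝ) : ℕ → ℝ → 𝔸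
  | 0, _ => 1
  | n + 1, t => -∫ τ in t..T, a τ * dysonTerm a T n τ

noncomputable def dysonSeries (a : ℝ → 𝔸) (T t : ℝ) : 𝔸 := ∑' n, dysonTerm a T n t

theorem continuous_dysonTerm {X : Type*} [TopologicalSpace X] {A : X → ℝ → 𝔸}
    (hA : Continuous A.uncurry) (T : ℝ) (n : ℕ) :
    Continuous (Function.uncurry fun x => dysonTerm (A x) T n) := by
  induction n with
  | zero => exact continuous_const
  | succ n ih =>
    have hc : Continuous fun q : (X × ℝ) × ℝ => (q.1.1, q.2) := by fun_prop
    have hint : Continuous fun q : (X × ℝ) × ℝ => A q.1.1 q.2 * dysonTerm (A q.1.1) T n q.2 :=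
      (hA.comp hc).mul (ih.comp hc)
    exact (continuous_parametric_intervalIntegral_of_continuous (a₀ := T) hint
      continuous_snd).congr fun p => integral_symm _ _

theorem continuous_dysonTerm_of_continuous {a : ℝ → 𝔸} (ha : Continuous a) (T : ℝ) (n : ℕ) :
    Continuous (dysonTerm a T n) :=
  (continuous_dysonTerm (A := fun (_ : Unit) => a) (ha.comp continuous_snd) T n).uncurry_left ()

theorem norm_dysonTerm_le {a : ℝ → 𝔸} {t₀ T M : ℝ} (hM : ∀ τ ∈ Icc t₀ T, ‖a τ‖ ≤ M)
    (n : ℕ) : ∀ t ∈ Icc t₀ T, ‖dysonTerm a T n t‖ ≤ ‖(1 : 𝔸)‖ * (M * (T - t)) ^ n / n ! := by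
  induction n with
  | zero => simp [dysonTerm]
  | succ n ih =>
    intro t ht
    have hM0 : 0 ≤ M := (norm_nonneg _).trans (hM t ht)
    have hstep : ∀ τ ∈ Ioc t T, ‖a τ * dysonTerm a T n τ‖ ≤
        ‖(1 : 𝔸)‖ * M ^ (n + 1) / n ! * (T - τ) ^ n := by
      intro τ hτ
      have hτ' : τ ∈ Icc t₀ T := ⟨ht.1.trans hτ.1.le, hτ.2⟩
      calc ‖a τ * dysonTerm a T n τ‖ ≤ M * (‖(1 : 𝔸)‖ * (M * (T - τ)) ^ n / n !) :=
            (norm_mul_le _ _).trans (mul_le_mul (hM τ hτ') (ih τ hτ') (norm_nonneg _) hM0)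
        _ = _ := by rw [mul_pow]; ring
    calc ‖dysonTerm a T (n + 1) t‖
        ≤ ‖(1 : 𝔸)‖ * M ^ (n + 1) / n ! * (T - t) ^ (n + 1) / (n + 1) := by
          rw [dysonTerm, norm_neg]; exact norm_integral_le_mul_pow_div ht.2 n hstep
      _ = _ := by rw [Nat.factorial_succ, mul_pow]; push_cast; field_simp

theorem norm_dysonTerm_le_uniform {a : ℝ → 𝔸} {t₀ T M : ℝ} (hM : ∀ τ ∈ Icc t₀ T, ‖a τ‖ ≤ M)
    (n : ℕ) {t : ℝ} (ht : t ∈ Icc t₀ T) :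
    ‖dysonTerm a T n t‖ ≤ ‖(1 : 𝔸)‖ * ((M * (T - t₀)) ^ n / n !) := by
  have hM0 : 0 ≤ M := (norm_nonneg _).trans (hM t ht)
  rw [← mul_div_assoc]
  have h0 : 0 ≤ M * (T - t) := mul_nonneg hM0 (sub_nonneg.2 ht.2)
  have h1 : M * (T - t) ≤ M * (T - t₀) := by gcongr; exact ht.1
  refine (norm_dysonTerm_le hM n t ht).trans ?_
  gcongr

theorem summable_mul_pow_div_factorial (C x : ℝ) : Summable fun n : ℕ => C * (x ^ n / n !) :=
  (Real.summable_pow_div_factorial _).mul_left C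

variable [CompleteSpace 𝔸] {a : ℝ → 𝔸} {T : ℝ}

theorem hasSum_dysonSeries (ha : Continuous a) {t : ℝ} (htT : t ≤ T) :
    HasSum (fun n => dysonTerm a T n t) (dysonSeries a T t) := by
  obtain ⟨M, hM⟩ := isCompact_Icc.exists_bound_of_continuousOn (ha.continuousOn (s := Icc t T))
  exact (Summable.of_norm_bounded (summable_mul_pow_div_factorial _ (M * (T - t)))
    fun n => norm_dysonTerm_le_uniform hM n ⟨le_rfl, htT⟩).hasSum

theorem continuousOn_dysonSeries (ha : Continuous a) (t₀ : ℝ) :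
    ContinuousOn (dysonSeries a T) (Icc t₀ T) := by
  obtain ⟨M, hM⟩ := isCompact_Icc.exists_bound_of_continuousOn (ha.continuousOn (s := Icc t₀ T))
  exact continuousOn_tsum
    (fun n => (continuous_dysonTerm_of_continuous ha T n).continuousOn)
    (summable_mul_pow_div_factorial _ (M * (T - t₀)))
    fun n t ht => norm_dysonTerm_le_uniform hM n ht

theorem dysonSeries_eq (ha : Continuous a) {t : ℝ} (htT : t ≤ T) :
    dysonSeries a T t = 1 - ∫ τ in t..T, a τ * dysonSeries a T τ := by
  obtain ⟨M, hM⟩ := isCompact_Icc.exists_bound_of_continuousOn (ha.continuousOn (s := Icc t T))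
  have hM0 : 0 ≤ M := (norm_nonneg _).trans (hM t ⟨le_rfl, htT⟩)
  have hint : HasSum (fun n => ∫ τ in t..T, a τ * dysonTerm a T n τ)
      (∫ τ in t..T, a τ * dysonSeries a T τ) := by
    refine hasSum_integral_of_dominated_convergence
      (fun n _ => M * (‖(1 : 𝔸)‖ * ((M * (T - t)) ^ n / n !))) (fun n => ?_) (fun n => ?_)
      (ae_of_all _ fun _ _ => (summable_mul_pow_div_factorial _ (M * (T - t))).mul_left M)
      intervalIntegrable_const (ae_of_all _ fun τ hτ => ?_)
    · exact (ha.mul (continuous_dysonTerm_of_continuous ha T n)).aestronglyMeasurable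
    · refine ae_of_all _ fun τ hτ => ?_
      rw [uIoc_of_le htT] at hτ
      have hτ' : τ ∈ Icc t T := Ioc_subset_Icc_self hτ
      exact (norm_mul_le _ _).trans (mul_le_mul (hM τ hτ') (norm_dysonTerm_le_uniform hM n hτ')
        (norm_nonneg _) hM0)
    · rw [uIoc_of_le htT] at hτ
      exact (hasSum_dysonSeries ha hτ.2).mul_left (a τ)
  have hsum := hasSum_dysonSeries ha htT
  rw [← hasSum_nat_add_iff' 1] at hsum
  simp only [dysonTerm, Finset.range_one, Finset.sum_singleton] at hsum
  rw [sub_eq_add_neg, hint.neg.unique hsum]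
  abel

theorem eqOn_dysonSeries (ha : Continuous a) {t₀ : ℝ} {Q : ℝ → 𝔸}
    (hQc : ContinuousOn Q (Icc t₀ T)) (hQ : ∀ t ∈ Icc t₀ T, Q t = 1 - ∫ τ in t..T, a τ * Q τ) :
    EqOn Q (dysonSeries a T) (Icc t₀ T) := by
  intro t ht
  obtain ⟨M, hM⟩ := isCompact_Icc.exists_bound_of_continuousOn (ha.continuousOn (s := Icc t₀ T))
  have hlip : ∀ s ∈ Ioc t₀ T, LipschitzOnWith M.toNNReal (a s * ·) univ := by
    refine fun s hs => LipschitzOnWith.of_dist_le_mul fun x _ y _ => ?_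
    rw [dist_eq_norm, dist_eq_norm, ← mul_sub]
    exact (norm_mul_le _ _).trans (mul_le_mul_of_nonneg_right
      ((hM s (Ioc_subset_Icc_self hs)).trans (Real.le_coe_toNNReal M)) (norm_nonneg _))
  have hderiv : ∀ P : ℝ → 𝔸, ContinuousOn P (Icc t₀ T) →
      (∀ t ∈ Icc t₀ T, P t = 1 - ∫ τ in t..T, a τ * P τ) →
      ∀ s ∈ Ioc t₀ T, HasDerivWithinAt P (a s * P s) (Iic s) s := fun P hPc hP s hs =>
    (hasDerivWithinAt_of_eq_sub_integral (ha.continuousOn.mul hPc) hP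
      (Ioc_subset_Icc_self hs)).mono_of_mem_nhdsWithin (Icc_mem_nhdsLE_of_mem hs)
  have hT : T ∈ Icc t₀ T := ⟨ht.1.trans ht.2, le_rfl⟩
  refine ODE_solution_unique_of_mem_Icc_left hlip hQc (hderiv Q hQc hQ) (fun _ _ => mem_univ _)
    (continuousOn_dysonSeries ha t₀)
    (hderiv _ (continuousOn_dysonSeries ha t₀) fun s hs => dysonSeries_eq ha hs.2)
    (fun _ _ => mem_univ _) ?_ ht
  rw [hQ T hT, dysonSeries_eq ha le_rfl, integral_same, integral_same]

end Dyson

section Holomorphic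

variable {𝔸 : Type*} [NormedRing 𝔸] [NormedAlgebra ℂ 𝔸] [CompleteSpace 𝔸] {A : ℂ → ℝ → 𝔸}

theorem differentiable_dysonTerm (hA : Continuous A.uncurry)
    (hdA : ∀ τ, Differentiable ℂ (A · τ)) (T : ℝ) (n : ℕ) (t : ℝ) :
    Differentiable ℂ fun ζ => dysonTerm (A ζ) T n t := by
  induction n generalizing t with
  | zero => exact differentiable_const _
  | succ n ih =>
    exact (differentiable_intervalIntegral_of_continuous
      (F := fun ζ τ => A ζ τ * dysonTerm (A ζ) T n τ) (hA.mul (continuous_dysonTerm hA T n))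
      (fun τ => (hdA τ).mul (ih τ)) t T).neg

theorem differentiable_dysonSeries (hA : Continuous A.uncurry)
    (hdA : ∀ τ, Differentiable ℂ (A · τ)) {T t : ℝ} (htT : t ≤ T) :
    Differentiable ℂ fun ζ => dysonSeries (A ζ) T t := by
  intro ζ₀
  obtain ⟨M, hM⟩ := ((isCompact_closedBall ζ₀ 1).prod (isCompact_Icc (a := t) (b := T))
    ).exists_bound_of_continuousOn hA.continuousOn
  have hbound : ∀ n, ∀ ζ ∈ ball ζ₀ 1,
      ‖dysonTerm (A ζ) T n t‖ ≤ ‖(1 : 𝔸)‖ * ((M * (T - t)) ^ n / n !) := fun n ζ hζ =>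
    norm_dysonTerm_le_uniform (fun τ hτ => hM (ζ, τ) ⟨ball_subset_closedBall hζ, hτ⟩) n
      ⟨le_rfl, htT⟩
  exact (Complex.differentiableOn_tsum_of_summable_norm
    (summable_mul_pow_div_factorial _ (M * (T - t)))
    (fun n => (differentiable_dysonTerm hA hdA T n t).differentiableOn) isOpen_ball
    hbound).differentiableAt (ball_mem_nhds ζ₀ one_pos)

end Holomorphic

-- The Banach-algebra results are used with the ℓ∞-operator norm; any submultiplicative one would do.
attribute [local instance] Matrix.linftyOpNormedRing Matrix.linftyOpNormedAlgebra

theorem continuousOn_matrix_iff {X R : Type*} [TopologicalSpace X] [TopologicalSpace R]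
    {m n : Type*} {f : X → Matrix m n R} {s : Set X} :
    ContinuousOn f s ↔ ∀ i j, ContinuousOn (fun x => f x i j) s :=
  continuousOn_pi.trans (forall_congr' fun _ => continuousOn_pi)

section MatrixCalculus

variable {n : Type*} [Fintype n] [DecidableEq n]

noncomputable def Matrix.entryCLM (i j : n) : Matrix n n ℂ →L[ℂ] ℂ :=
  LinearMap.toContinuousLinearMap (Matrix.entryLinearMap ℂ ℂ i j)

theorem differentiable_matrix_iff {f : ℂ → Matrix n n ℂ} :
    Differentiable ℂ f ↔ ∀ i j, Differentiable ℂ fun ζ => f ζ i j := by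
  let e : (n → n → ℂ) ≃L[ℂ] Matrix n n ℂ :=
    (Matrix.ofLinearEquiv ℂ).toContinuousLinearEquiv
  exact e.symm.comp_differentiable_iff.symm.trans
    (differentiable_pi.trans (forall_congr' fun i => differentiable_pi))

end MatrixCalculus

theorem hasDerivWithinAt_det_fin_two {Q : ℝ → Matrix (Fin 2) (Fin 2) ℂ}
    {B : Matrix (Fin 2) (Fin 2) ℂ} {s : Set ℝ} {t : ℝ} (hQ : HasDerivWithinAt Q (B * Q t) s t) :
    HasDerivWithinAt (fun t => (Q t).det) (B.trace * (Q t).det) s t := by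
  have he : ∀ i j, HasDerivWithinAt (fun t => Q t i j) ((B * Q t) i j) s t := fun i j =>
    ((Matrix.entryCLM i j).restrictScalars ℝ).hasFDerivAt.comp_hasDerivWithinAt t hQ
  rw [show (fun t => (Q t).det) = fun t => Q t 0 0 * Q t 1 1 - Q t 0 1 * Q t 1 0 from
    funext fun t => det_fin_two (Q t)]
  refine (((he 0 0).mul (he 1 1)).sub ((he 0 1).mul (he 1 0))).congr_deriv ?_
  simp only [det_fin_two, trace_fin_two, mul_apply, Fin.sum_univ_two]
  ring

theorem det_dysonSeries {a : ℝ → Matrix (Fin 2) (Fin 2) ℂ} (ha : Continuous a)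
    (htr : ∀ τ, (a τ).trace = 0) {T t : ℝ} (htT : t ≤ T) : (dysonSeries a T t).det = 1 := by
  have hd : ∀ s ∈ Icc t T, HasDerivWithinAt (fun s => (dysonSeries a T s).det) 0 (Icc t T) s := by
    intro s hs
    simpa [htr] using hasDerivWithinAt_det_fin_two (hasDerivWithinAt_of_eq_sub_integral
      (ha.continuousOn.mul (continuousOn_dysonSeries ha t))
      (fun s hs => dysonSeries_eq ha hs.2) hs)
  have hconst := constant_of_has_deriv_right_zero (fun s hs => (hd s hs).continuousWithinAt)
    (fun s hs => (hd s (Ico_subset_Icc_self hs)).mono_of_mem_nhdsWithin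
      (Icc_mem_nhdsGE_of_mem hs)) T ⟨htT, le_rfl⟩
  rw [← hconst, dysonSeries_eq ha le_rfl, integral_same, sub_zero, det_one]

/-- `exp(cΛ)` with `Λ = diag(1, -1)`. -/
noncomputable def expΛ (c : ℂ) : Matrix (Fin 2) (Fin 2) ℂ :=
  diagonal ![Complex.exp c, Complex.exp (-c)]

theorem expΛ_add (c d : ℂ) : expΛ (c + d) = expΛ c * expΛ d := by
  rw [expΛ, expΛ, expΛ, diagonal_mul_diagonal]
  congr 1
  ext i
  fin_cases i <;> simp [Complex.exp_add, mul_comm]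

theorem expΛ_zero : expΛ 0 = 1 := by
  rw [expΛ, ← diagonal_one]
  congr 1
  ext i
  fin_cases i <;> simp

theorem expΛ_neg_mul (c : ℂ) : expΛ (-c) * expΛ c = 1 := by
  rw [← expΛ_add, neg_add_cancel, expΛ_zero]

theorem expΛ_mul_neg (c : ℂ) : expΛ c * expΛ (-c) = 1 := by
  simpa using expΛ_neg_mul (-c)

theorem expΛ_neg_mul_cancel_left (c : ℂ) (M : Matrix (Fin 2) (Fin 2) ℂ) :
    expΛ (-c) * (expΛ c * M) = M := by
  rw [← mul_assoc, expΛ_neg_mul, one_mul]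

theorem det_expΛ (c : ℂ) : (expΛ c).det = 1 := by
  simp [expΛ, ← Complex.exp_add]

theorem differentiable_expΛ : Differentiable ℂ expΛ := by
  refine differentiable_matrix_iff.2 fun i j => ?_
  fin_cases i <;> fin_cases j <;> simp [expΛ, differentiable_neg.cexp]

theorem expΛ_neg_conj_conj (c : ℂ) (M : Matrix (Fin 2) (Fin 2) ℂ) :
    expΛ (-c) * (expΛ c * M * expΛ (-c)) * expΛ c = M := by
  simp only [mul_assoc, expΛ_neg_mul_cancel_left, expΛ_neg_mul, mul_one]

theorem expΛ_conj_neg_conj (c : ℂ) (M : Matrix (Fin 2) (Fin 2) ℂ) :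
    expΛ c * (expΛ (-c) * M * expΛ c) * expΛ (-c) = M := by
  simpa using expΛ_neg_conj_conj (-c) M

theorem expΛ_conj_inj {c : ℂ} {M N : Matrix (Fin 2) (Fin 2) ℂ} :
    expΛ c * M * expΛ (-c) = expΛ c * N * expΛ (-c) ↔ M = N :=
  ⟨fun h => by simpa only [expΛ_neg_conj_conj] using congrArg (expΛ (-c) * · * expΛ c) h,
    fun h => h ▸ rfl⟩

noncomputable def phase (γ : ℝ) (ζ : ℂ) (s : ℝ) : ℂ :=
  Complex.I * (8 * (γ : ℂ) * ζ ^ 4 - 2 * ζ ^ 2) * (s : ℂ)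

noncomputable def gaugedPotential (γ : ℝ) (v₀ v₁ v₂ v₃ : ℝ → ℂ) (ζ : ℂ) (τ : ℝ) :
    Matrix (Fin 2) (Fin 2) ℂ :=
  expΛ (-phase γ ζ τ) * Rm γ v₀ v₁ v₂ v₃ τ ζ * expΛ (phase γ ζ τ)

section Potential

variable {γ : ℝ} {v₀ v₁ v₂ v₃ : ℝ → ℂ}

theorem continuous_phase : Continuous (Function.uncurry (phase γ)) := by
  unfold phase; fun_prop

theorem differentiable_phase (s : ℝ) : Differentiable ℂ fun ζ => phase γ ζ s := by
  unfold phase; fun_prop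

theorem continuous_Rm (h₀ : Continuous v₀) (h₁ : Continuous v₁) (h₂ : Continuous v₂)
    (h₃ : Continuous v₃) : Continuous fun p : ℂ × ℝ => Rm γ v₀ v₁ v₂ v₃ p.2 p.1 := by
  refine continuous_matrix fun i j => ?_
  fin_cases i <;> fin_cases j <;> simp [Rm] <;> fun_prop

theorem differentiable_Rm (τ : ℝ) : Differentiable ℂ fun ζ => Rm γ v₀ v₁ v₂ v₃ τ ζ := by
  refine differentiable_matrix_iff.2 fun i j => ?_
  fin_cases i <;> fin_cases j <;> simp [Rm] <;> fun_prop

theorem trace_Rm (τ : ℝ) (ζ : ℂ) : (Rm γ v₀ v₁ v₂ v₃ τ ζ).trace = 0 := by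
  simp only [Rm, trace_fin_two, of_apply, cons_val', cons_val_zero, cons_val_fin_one,
    cons_val_one]
  ring

theorem continuous_gaugedPotential (h₀ : Continuous v₀) (h₁ : Continuous v₁)
    (h₂ : Continuous v₂) (h₃ : Continuous v₃) :
    Continuous (Function.uncurry (gaugedPotential γ v₀ v₁ v₂ v₃)) :=
  ((differentiable_expΛ.continuous.comp continuous_phase.neg).mul
    (continuous_Rm h₀ h₁ h₂ h₃)).mul (differentiable_expΛ.continuous.comp continuous_phase)

theorem differentiable_gaugedPotential (τ : ℝ) :
    Differentiable ℂ fun ζ => gaugedPotential γ v₀ v₁ v₂ v₃ ζ τ :=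
  ((differentiable_expΛ.comp (differentiable_phase τ).neg).mul (differentiable_Rm τ)).mul
    (differentiable_expΛ.comp (differentiable_phase τ))

theorem trace_gaugedPotential (ζ : ℂ) (τ : ℝ) :
    (gaugedPotential γ v₀ v₁ v₂ v₃ ζ τ).trace = 0 := by
  rw [gaugedPotential, trace_mul_cycle, ← expΛ_add, add_neg_cancel, expΛ_zero, one_mul, trace_Rm]

theorem Km_eq (ζ : ℂ) (G : ℝ → Matrix (Fin 2) (Fin 2) ℂ) (t τ : ℝ) :
    Km γ v₀ v₁ v₂ v₃ ζ G t τ =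
      expΛ (phase γ ζ (t - τ)) * (Rm γ v₀ v₁ v₂ v₃ τ ζ * G τ) * expΛ (-phase γ ζ (t - τ)) := by
  simp only [Km, expΛ, phase, diagonal_vec2, neg_neg]

theorem Km_expΛ_conj (ζ : ℂ) (X : ℝ → Matrix (Fin 2) (Fin 2) ℂ) (t τ : ℝ) :
    Km γ v₀ v₁ v₂ v₃ ζ (fun s => expΛ (phase γ ζ s) * X s * expΛ (-phase γ ζ s)) t τ =
      expΛ (phase γ ζ t) * (gaugedPotential γ v₀ v₁ v₂ v₃ ζ τ * X τ) * expΛ (-phase γ ζ t) := by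
  have hsub : phase γ ζ (t - τ) = phase γ ζ t + -phase γ ζ τ := by
    simp only [phase]; push_cast; ring
  rw [Km_eq, hsub, neg_add_rev, neg_neg, expΛ_add, expΛ_add]
  simp only [gaugedPotential, mul_assoc, expΛ_neg_mul_cancel_left]

end Potential

section Equation

variable {γ T : ℝ} {ζ : ℂ}

theorem isVolterraSolT_congr {v₀ v₁ v₂ v₃ w₀ w₁ w₂ w₃ : ℝ → ℂ} (h₀ : EqOn v₀ w₀ (Icc 0 T))
    (h₁ : EqOn v₁ w₁ (Icc 0 T)) (h₂ : EqOn v₂ w₂ (Icc 0 T)) (h₃ : EqOn v₃ w₃ (Icc 0 T))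
    {G : ℝ → Matrix (Fin 2) (Fin 2) ℂ} :
    IsVolterraSolT γ T v₀ v₁ v₂ v₃ ζ G ↔ IsVolterraSolT γ T w₀ w₁ w₂ w₃ ζ G := by
  refine and_congr_right' (forall₂_congr fun t ht => forall₂_congr fun i j => ?_)
  have hK : EqOn (fun τ => Km γ v₀ v₁ v₂ v₃ ζ G t τ i j) (fun τ => Km γ w₀ w₁ w₂ w₃ ζ G t τ i j)
      (uIcc t T) := fun τ hτ => by
    have hτ' : τ ∈ Icc 0 T := uIcc_subset_Icc ht ⟨ht.1.trans ht.2, le_rfl⟩ hτ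
    simp only [Km, Rm, h₀ hτ', h₁ hτ', h₂ hτ', h₃ hτ']
  rw [intervalIntegrable_congr (hK.mono uIoc_subset_uIcc), integral_congr hK]

variable {w₀ w₁ w₂ w₃ : ℝ → ℂ}

theorem forall_entry_eq_one_sub_integral_iff {K : ℝ → Matrix (Fin 2) (Fin 2) ℂ} {t T : ℝ}
    (hK : ContinuousOn K (uIcc t T)) {M : Matrix (Fin 2) (Fin 2) ℂ} :
    (∀ i j, IntervalIntegrable (fun τ => K τ i j) volume t T ∧
      M i j = (1 : Matrix (Fin 2) (Fin 2) ℂ) i j - ∫ τ in t..T, K τ i j) ↔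
      M = 1 - ∫ τ in t..T, K τ := by
  have hentry : ∀ i j, ∫ τ in t..T, K τ i j = (∫ τ in t..T, K τ) i j := fun i j =>
    (Matrix.entryCLM i j).intervalIntegral_comp_comm hK.intervalIntegrable
  refine ⟨fun h => ?_, fun h i j => ⟨?_, ?_⟩⟩
  · ext i j
    rw [(h i j).2, hentry, Matrix.sub_apply]
  · exact ((Matrix.entryCLM i j).continuous.comp_continuousOn hK).intervalIntegrable
  · rw [h, hentry, Matrix.sub_apply]

theorem isVolterraSolT_conj_iff (hw₀ : Continuous w₀) (hw₁ : Continuous w₁)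
    (hw₂ : Continuous w₂) (hw₃ : Continuous w₃) {Q : ℝ → Matrix (Fin 2) (Fin 2) ℂ} :
    IsVolterraSolT γ T w₀ w₁ w₂ w₃ ζ (fun s => expΛ (phase γ ζ s) * Q s * expΛ (-phase γ ζ s)) ↔
      ContinuousOn Q (Icc 0 T) ∧
        ∀ t ∈ Icc 0 T, Q t = 1 - ∫ τ in t..T, gaugedPotential γ w₀ w₁ w₂ w₃ ζ τ * Q τ := by
  set A := gaugedPotential γ w₀ w₁ w₂ w₃ ζ
  set E := fun s => expΛ (phase γ ζ s)
  set E' := fun s => expΛ (-phase γ ζ s)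
  have hA : Continuous A := (continuous_gaugedPotential hw₀ hw₁ hw₂ hw₃).uncurry_left ζ
  have hE : Continuous E := differentiable_expΛ.continuous.comp (continuous_phase.uncurry_left ζ)
  have hE' : Continuous E' :=
    differentiable_expΛ.continuous.comp (continuous_phase.uncurry_left ζ).neg
  have hcont : ContinuousOn (fun s => E s * Q s * E' s) (Icc 0 T) ↔ ContinuousOn Q (Icc 0 T) :=
    ⟨fun h => ((hE'.continuousOn.mul h).mul hE.continuousOn).congr fun s _ =>
      (expΛ_neg_conj_conj _ _).symm,
    fun h => (hE.continuousOn.mul h).mul hE'.continuousOn⟩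
  rw [IsVolterraSolT, ← continuousOn_matrix_iff, hcont]
  refine and_congr_right fun hQ => forall₂_congr fun t ht => ?_
  have hf : ContinuousOn (fun τ => A τ * Q τ) (uIcc t T) :=
    (hA.continuousOn.mul hQ).mono (uIcc_subset_Icc ht ⟨ht.1.trans ht.2, le_rfl⟩)
  have hKm : (fun τ => Km γ w₀ w₁ w₂ w₃ ζ (fun s => E s * Q s * E' s) t τ) =
      fun τ => E t * (A τ * Q τ) * E' t := funext fun τ => Km_expΛ_conj ζ Q t τ
  have hint : ∫ τ in t..T, E t * (A τ * Q τ) * E' t = E t * (∫ τ in t..T, A τ * Q τ) * E' t := by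
    simpa using (ContinuousLinearMap.mulLeftRight ℂ _ (E t) (E' t)).intervalIntegral_comp_comm
      hf.intervalIntegrable
  have hK : ContinuousOn (fun τ => Km γ w₀ w₁ w₂ w₃ ζ (fun s => E s * Q s * E' s) t τ)
      (uIcc t T) := by
    rw [hKm]; exact (continuousOn_const.mul hf).mul continuousOn_const
  refine (forall_entry_eq_one_sub_integral_iff hK).trans ?_
  rw [hKm, hint, ← expΛ_conj_inj (c := phase γ ζ t) (M := Q t)]
  simp only [E, E']
  rw [mul_sub, sub_mul, mul_one, expΛ_mul_neg]

noncomputable def tEigenfunction (γ T : ℝ) (w₀ w₁ w₂ w₃ : ℝ → ℂ) (ζ : ℂ) (t : ℝ) :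
    Matrix (Fin 2) (Fin 2) ℂ :=
  expΛ (phase γ ζ t) * dysonSeries (gaugedPotential γ w₀ w₁ w₂ w₃ ζ) T t *
    expΛ (-phase γ ζ t)

theorem isVolterraSolT_tEigenfunction (hw₀ : Continuous w₀) (hw₁ : Continuous w₁)
    (hw₂ : Continuous w₂) (hw₃ : Continuous w₃) :
    IsVolterraSolT γ T w₀ w₁ w₂ w₃ ζ (tEigenfunction γ T w₀ w₁ w₂ w₃ ζ) :=
  have hA := (continuous_gaugedPotential hw₀ hw₁ hw₂ hw₃).uncurry_left ζ
  (isVolterraSolT_conj_iff hw₀ hw₁ hw₂ hw₃).2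
    ⟨continuousOn_dysonSeries hA 0, fun _ ht => dysonSeries_eq hA ht.2⟩

theorem eq_tEigenfunction (hw₀ : Continuous w₀) (hw₁ : Continuous w₁) (hw₂ : Continuous w₂)
    (hw₃ : Continuous w₃) {H : ℝ → Matrix (Fin 2) (Fin 2) ℂ}
    (hH : IsVolterraSolT γ T w₀ w₁ w₂ w₃ ζ H) {t : ℝ} (ht : t ∈ Icc 0 T) :
    H t = tEigenfunction γ T w₀ w₁ w₂ w₃ ζ t := by
  have hHQ : H = fun s => expΛ (phase γ ζ s) *
      (expΛ (-phase γ ζ s) * H s * expΛ (phase γ ζ s)) * expΛ (-phase γ ζ s) :=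
    funext fun s => (expΛ_conj_neg_conj _ _).symm
  rw [hHQ, isVolterraSolT_conj_iff hw₀ hw₁ hw₂ hw₃] at hH
  exact (congrFun hHQ t).trans (congrArg (expΛ (phase γ ζ t) * · * expΛ (-phase γ ζ t))
    (eqOn_dysonSeries ((continuous_gaugedPotential hw₀ hw₁ hw₂ hw₃).uncurry_left ζ)
      hH.1 hH.2 ht))

theorem det_tEigenfunction (hw₀ : Continuous w₀) (hw₁ : Continuous w₁) (hw₂ : Continuous w₂)
    (hw₃ : Continuous w₃) {t : ℝ} (htT : t ≤ T) :
    (tEigenfunction γ T w₀ w₁ w₂ w₃ ζ t).det = 1 := by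
  rw [tEigenfunction, det_mul, det_mul, det_expΛ, det_expΛ, one_mul, mul_one,
    det_dysonSeries ((continuous_gaugedPotential hw₀ hw₁ hw₂ hw₃).uncurry_left ζ)
      (trace_gaugedPotential ζ) htT]

theorem differentiable_tEigenfunction (hw₀ : Continuous w₀) (hw₁ : Continuous w₁)
    (hw₂ : Continuous w₂) (hw₃ : Continuous w₃) {t : ℝ} (htT : t ≤ T) :
    Differentiable ℂ fun ζ => tEigenfunction γ T w₀ w₁ w₂ w₃ ζ t :=
  ((differentiable_expΛ.comp (differentiable_phase t)).mul
    (differentiable_dysonSeries (continuous_gaugedPotential hw₀ hw₁ hw₂ hw₃)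
      differentiable_gaugedPotential htT)).mul
    (differentiable_expΛ.comp (differentiable_phase t).neg)

end Equation

/-- for continuous boundary data `v₀, v₁, v₂, v₃` on `[0,T]` and every
`ζ ∈ ℂ`, the Volterra equation for the t-part eigenfunction has a unique continuous solution
`G(·,ζ)` on `[0,T]`; `det G(t,ζ) = 1` on `[0,T]`; every entry of `G(t,ζ)` is entire in `ζ`;
in particular the spectral functions `Y(ζ) = G₂₂(0,ζ)` and `Z(ζ) = G₁₂(0,ζ)` are entire. -/
theorem stmt_19 (γ : ℝ) (T : ℝ) (hT : 0 < T) (v₀ v₁ v₂ v₃ : ℝ → ℂ)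
    (h₀ : ContinuousOn v₀ (Set.Icc 0 T)) (h₁ : ContinuousOn v₁ (Set.Icc 0 T))
    (h₂ : ContinuousOn v₂ (Set.Icc 0 T)) (h₃ : ContinuousOn v₃ (Set.Icc 0 T)) :
    ∃ G : ℂ → ℝ → Matrix (Fin 2) (Fin 2) ℂ,
      (∀ ζ : ℂ, IsVolterraSolT γ T v₀ v₁ v₂ v₃ ζ (G ζ)) ∧
      (∀ (ζ : ℂ) (H : ℝ → Matrix (Fin 2) (Fin 2) ℂ), IsVolterraSolT γ T v₀ v₁ v₂ v₃ ζ H →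
        ∀ t ∈ Set.Icc (0 : ℝ) T, H t = G ζ t) ∧
      (∀ ζ : ℂ, ∀ t ∈ Set.Icc (0 : ℝ) T, (G ζ t).det = 1) ∧
      (∀ t ∈ Set.Icc (0 : ℝ) T, ∀ i j : Fin 2, Differentiable ℂ fun ζ => G ζ t i j) ∧
      (Differentiable ℂ fun ζ => G ζ 0 1 1) ∧ (Differentiable ℂ fun ζ => G ζ 0 0 1) := by
  obtain ⟨w₀, hw₀, hvw₀⟩ := h₀.exists_continuous_eqOn_Icc hT.le
  obtain ⟨w₁, hw₁, hvw₁⟩ := h₁.exists_continuous_eqOn_Icc hT.le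
  obtain ⟨w₂, hw₂, hvw₂⟩ := h₂.exists_continuous_eqOn_Icc hT.le
  obtain ⟨w₃, hw₃, hvw₃⟩ := h₃.exists_continuous_eqOn_Icc hT.le
  have hsol : ∀ ζ H, IsVolterraSolT γ T v₀ v₁ v₂ v₃ ζ H ↔ IsVolterraSolT γ T w₀ w₁ w₂ w₃ ζ H :=
    fun _ _ => isVolterraSolT_congr hvw₀ hvw₁ hvw₂ hvw₃
  have hdiff : ∀ t ∈ Icc 0 T, ∀ i j : Fin 2,
      Differentiable ℂ fun ζ => tEigenfunction γ T w₀ w₁ w₂ w₃ ζ t i j := fun t ht =>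
    differentiable_matrix_iff.1 (differentiable_tEigenfunction hw₀ hw₁ hw₂ hw₃ ht.2)
  refine ⟨tEigenfunction γ T w₀ w₁ w₂ w₃,
    fun ζ => (hsol ζ _).2 (isVolterraSolT_tEigenfunction hw₀ hw₁ hw₂ hw₃),
    fun ζ H hH t ht => eq_tEigenfunction hw₀ hw₁ hw₂ hw₃ ((hsol ζ H).1 hH) ht,
    fun ζ t ht => det_tEigenfunction hw₀ hw₁ hw₂ hw₃ ht.2, hdiff,
    hdiff 0 ⟨le_rfl, hT.le⟩ 1 1, hdiff 0 ⟨le_rfl, hT.le⟩ 0 1⟩
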